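/- arXiv:1405.6616 — 2 statements merged into one kernel-verified Lean document; each statement's English description precedes it below -/
import Mathlib

section
/- Let G = A ⋊ V where A is a finite abelian group and V is an elementary abelian p-group. Then every irreducible complex character of G occurs with multiplicity exactly 1 in the permutation character C[G/H] for a suitable subgroup H ≤ G. -/
open scoped BigOperators
open Classical

variable {G : Type} [Group G] [Fintype G]

/-- The permutation character of `G` acting on `G ⧸ H`. -/
noncomputable def permChar (H : Subgroup G) : G → ℂ :=
  fun g => (Fintype.card {x : G ⧸ H // g • x = x} : ℂ)

/-- Inner product of class functions on a finite group. -/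
noncomputable def innerChar (f₁ f₂ : G → ℂ) : ℂ :=
  (Fintype.card G : ℂ)⁻¹ * ∑ g : G, f₁ g * (starRingEnd ℂ) (f₂ g)

/-- `τ` is the character of an irreducible complex representation of `G`. -/
def IsIrredChar (τ : G → ℂ) : Prop :=
  ∃ V : FDRep ℂ G, CategoryTheory.Simple V ∧ τ = V.character

/-!
Let `M` afford `τ`. Since `A` is abelian, `M` has a nonzero weight space `M_χ` for some character
`χ` of `A`. The stabiliser `V₀` of `χ` in `V` preserves `M_χ` and, being abelian, has a common
eigenvector `y` in it. As `V` is elementary abelian, `V₀` has a complement `U` in `V`. The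
translates `u • y` (`u ∈ U`) are weight vectors for the pairwise distinct conjugates of `χ`, so they
are linearly independent, and since `G = A U V₀` they span a `G`-stable subspace, hence all of `M`.
So `M` restricted to `U` is the regular representation of `U`, and by Frobenius reciprocity
`⟨τ, ℂ[G/U]⟩ = |U|⁻¹ ∑_{u ∈ U} τ u = 1`.
-/

open Module

theorem Submodule.exists_inf_eigenspace_ne_bot {k W : Type*} [Field k] [IsAlgClosed k]
    [AddCommGroup W] [Module k W] [FiniteDimensional k W] (f : End k W) {p : Submodule k W}
    (hp : p ≠ ⊥) (hfp : ∀ x ∈ p, f x ∈ p) : ∃ μ : k, p ⊓ f.eigenspace μ ≠ ⊥ := by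
  have : Nontrivial p := Submodule.nontrivial_iff_ne_bot.mpr hp
  obtain ⟨μ, hμ⟩ := End.exists_eigenvalue (f.restrict hfp)
  refine ⟨μ, ?_⟩
  rw [p.inf_genEigenspace f hfp]
  exact (Submodule.map_injective_of_injective p.injective_subtype).ne_iff' (Submodule.map_bot _)
    |>.mpr hμ

theorem Module.End.exists_inf_iInf_eigenspace_ne_bot {ι k W : Type*} [Field k] [IsAlgClosed k]
    [AddCommGroup W] [Module k W] [FiniteDimensional k W] (f : ι → End k W)
    (hf : ∀ i j, Commute (f i) (f j)) {p : Submodule k W} (hp : p ≠ ⊥)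
    (hfp : ∀ i, ∀ x ∈ p, f i x ∈ p) :
    ∃ χ : ι → k, p ⊓ ⨅ i, (f i).eigenspace (χ i) ≠ ⊥ := by
  -- a minimal nonzero invariant subspace of `p` lies in an eigenspace of every `f i`
  obtain ⟨q, ⟨hqp, hq, hfq⟩, hmin⟩ := wellFounded_lt.has_min
    {q : Submodule k W | q ≤ p ∧ q ≠ ⊥ ∧ ∀ i, ∀ x ∈ q, f i x ∈ q} ⟨p, le_rfl, hp, hfp⟩
  have hq_le : ∀ i, ∃ c, q ≤ (f i).eigenspace c := by
    intro i
    obtain ⟨c, hc⟩ := q.exists_inf_eigenspace_ne_bot (f i) hq (hfq i)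
    have hinv : ∀ j, ∀ x ∈ q ⊓ (f i).eigenspace c, f j x ∈ q ⊓ (f i).eigenspace c :=
      fun j x hx ↦ ⟨hfq j x hx.1, mapsTo_genEigenspace_of_comm (hf i j) c 1 hx.2⟩
    exact ⟨c, inf_eq_left.mp <| eq_of_le_of_not_lt inf_le_left <|
      hmin _ ⟨inf_le_left.trans hqp, hc, hinv⟩⟩
  choose χ hχ using hq_le
  exact ⟨χ, ne_bot_of_le_ne_bot hq (le_inf hqp (le_iInf hχ))⟩

theorem Module.Basis.trace_eq_card_fixedPoints {ι k W : Type*} [Field k] [AddCommGroup W]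
    [Module k W] [Fintype ι] (b : Basis ι k W) (f : W →ₗ[k] W) (σ : ι → ι)
    (hf : ∀ i, f (b i) = b (σ i)) :
    LinearMap.trace k W f = Fintype.card {i // σ i = i} := by
  rw [LinearMap.trace_eq_matrix_trace k b, Matrix.trace]
  simp [LinearMap.toMatrix_apply, hf, Finsupp.single_apply, Fintype.card_subtype, Finset.sum_boole]

theorem Subgroup.complementedLattice_of_pow_prime_eq_one {K : Type*} [CommGroup K] {p : ℕ}
    (hp : p.Prime) (hK : ∀ x : K, x ^ p = 1) : ComplementedLattice (Subgroup K) := by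
  have : Fact p.Prime := ⟨hp⟩
  let _ : Module (ZMod p) (Additive K) :=
    AddCommGroup.zmodModule (n := p) fun x ↦ congrArg Additive.ofMul (hK x.toMul)
  let e : Subgroup K ≃o Submodule (ZMod p) (Additive K) :=
    Subgroup.toAddSubgroup.trans (AddSubgroup.toZModSubmodule p)
  exact e.complementedLattice_iff.mpr inferInstance

open scoped IsMulCommutative in
theorem Subgroup.exists_complement_of_pow_prime_eq_one {G : Type*} [Group G] {p : ℕ}
    (hp : p.Prime) {V : Subgroup G} [IsMulCommutative V] (hVp : ∀ v ∈ V, v ^ p = 1)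
    (V₀ : Subgroup G) :
    ∃ U ≤ V, Disjoint U V₀ ∧ ∀ v ∈ V, ∃ u ∈ U, ∃ w ∈ V₀, u * w = v := by
  have := complementedLattice_of_pow_prime_eq_one hp fun v : V ↦ Subtype.ext (hVp v v.2)
  obtain ⟨U, hU⟩ := exists_isCompl (V₀.subgroupOf V)
  refine ⟨U.map V.subtype, map_subtype_le U, ?_, fun v hv ↦ ?_⟩
  · rw [disjoint_def]
    rintro _ ⟨u, hu, rfl⟩ hu₀
    simpa using disjoint_def.mp hU.disjoint (mem_subgroupOf.mpr hu₀) hu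
  · obtain ⟨w, hw, u, hu, h⟩ := mem_sup.mp (hU.sup_eq_top ▸ mem_top (⟨v, hv⟩ : V))
    rw [mul_comm] at h
    exact ⟨u, mem_map_of_mem _ hu, w, mem_subgroupOf.mp hw, congrArg Subtype.val h⟩

namespace Representation

variable {k G W : Type*} [Field k] [Group G] [AddCommGroup W] [Module k W]
  (ρ : Representation k G W) (A : Subgroup G)

def weightSpace (χ : A → k) : Submodule k W :=
  ⨅ a : A, Module.End.eigenspace (ρ a) (χ a)

variable {ρ A} in
theorem mem_weightSpace_iff {χ : A → k} {x : W} :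
    x ∈ weightSpace ρ A χ ↔ ∀ a : A, ρ a x = χ a • x := by
  simp [weightSpace]

theorem apply_mem_weightSpace [A.Normal] {χ ψ : A → k} (g : G)
    (hψ : ∀ a, ψ (MulAut.conjNormal g a) = χ a) {x : W} (hx : x ∈ weightSpace ρ A χ) :
    ρ g x ∈ weightSpace ρ A ψ := by
  rw [mem_weightSpace_iff] at hx ⊢
  intro b
  obtain ⟨a, rfl⟩ := (MulAut.conjNormal g).surjective b
  have : (MulAut.conjNormal g a : G) * g = g * a := by simp
  rw [hψ, ← Module.End.mul_apply, ← map_mul, this, map_mul, Module.End.mul_apply, hx, map_smul]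

theorem apply_mem_weightSpace_comp_symm [A.Normal] {χ : A → k} (g : G) {x : W}
    (hx : x ∈ weightSpace ρ A χ) :
    ρ g x ∈ weightSpace ρ A (χ ∘ (MulAut.conjNormal g).symm) :=
  apply_mem_weightSpace ρ A g (by simp) hx

theorem iSupIndep_weightSpace [IsMulCommutative A] : iSupIndep (weightSpace ρ A) := by
  refine (Module.End.independent_iInf_maxGenEigenspace_of_forall_mapsTo (fun a : A ↦ ρ a)
    fun a b μ ↦ Module.End.mapsTo_genEigenspace_of_comm ?_ μ ⊤).mono fun χ ↦
      iInf_mono fun a ↦ (Module.End.genEigenspace (ρ a) (χ a)).monotone le_top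
  rw [Commute, SemiconjBy, ← map_mul, ← map_mul, setLike_mul_comm a.2 b.2]

def weightStabilizer [A.Normal] (χ : A → k) : Subgroup G where
  carrier := {g | ∀ a, χ (MulAut.conjNormal g a) = χ a}
  one_mem' := by simp
  mul_mem' := by
    intro g h hg hh a
    rw [map_mul, MulAut.mul_apply, hg, hh]
  inv_mem' := by
    intro g hg a
    rw [← hg, ← MulAut.mul_apply, ← map_mul, mul_inv_cancel, map_one, MulAut.one_apply]

theorem linearIndependent_apply_of_disjoint_weightStabilizer [A.Normal] [IsMulCommutative A]
    {χ : A → k} {y : W} (hy : y ∈ weightSpace ρ A χ) (hy0 : y ≠ 0) {U : Subgroup G}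
    (hU : Disjoint U (weightStabilizer A χ)) :
    LinearIndependent k fun u : U ↦ ρ u y := by
  have hinj : Function.Injective fun u : U ↦ χ ∘ (MulAut.conjNormal (u : G)).symm := by
    intro u u' h
    have hstab : (u' : G)⁻¹ * u ∈ weightStabilizer A χ := fun a ↦ by
      have := congrFun h (MulAut.conjNormal (u : G) a)
      simp only [Function.comp_apply, MulEquiv.symm_apply_apply] at this
      rw [this, ← MulAut.inv_apply, ← map_inv, ← MulAut.mul_apply, ← map_mul]
    have := Subgroup.disjoint_def.mp hU (U.mul_mem (U.inv_mem u'.2) u.2) hstab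
    exact (Subtype.ext (inv_mul_eq_one.mp this)).symm
  exact ((iSupIndep_weightSpace ρ A).comp hinj).linearIndependent _
    (fun u ↦ apply_mem_weightSpace_comp_symm ρ A u hy)
    (fun u ↦ (ρ.apply_bijective u).1.ne_iff' (map_zero _) |>.mpr hy0)

theorem span_range_apply_eq_top [IsIrreducible ρ] [A.Normal] {V₀ U : Subgroup G} {χ : A → k}
    {ψ : V₀ → k} {y : W} (hyA : y ∈ weightSpace ρ A χ) (hyV₀ : y ∈ weightSpace ρ V₀ ψ)
    (hy0 : y ≠ 0) (hG : ∀ g : G, ∃ a ∈ A, ∃ u ∈ U, ∃ w ∈ V₀, a * u * w = g) :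
    Submodule.span k (Set.range fun u : U ↦ ρ u y) = ⊤ := by
  set T := Submodule.span k (Set.range fun u : U ↦ ρ u y)
  have hT : ∀ g, ∀ x ∈ T, ρ g x ∈ T := by
    intro g x hx
    induction hx using Submodule.span_induction with
    | mem _ hx =>
      obtain ⟨u, rfl⟩ := hx
      -- with `g * u = a * u' * w`, the vector `ρ g (ρ u y)` is a multiple of `ρ u' y`
      obtain ⟨a, ha, u', hu', w, hw, h⟩ := hG (g * u)
      have hu'y := apply_mem_weightSpace_comp_symm ρ A u' hyA
      rw [← Module.End.mul_apply, ← map_mul, ← h, map_mul, map_mul, Module.End.mul_apply,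
        Module.End.mul_apply, mem_weightSpace_iff.mp hyV₀ ⟨w, hw⟩, map_smul, map_smul,
        mem_weightSpace_iff.mp hu'y ⟨a, ha⟩]
      exact T.smul_mem _ (T.smul_mem _ (Submodule.subset_span ⟨⟨u', hu'⟩, rfl⟩))
    | zero => simp
    | add x x' _ _ hx hx' => simpa using T.add_mem hx hx'
    | smul c x _ hx => simpa using T.smul_mem c hx
  have hTbot : (⟨T, hT⟩ : Subrepresentation ρ) ≠ ⊥ := fun h ↦ hy0 <| by
    have hyT : y ∈ (⟨T, hT⟩ : Subrepresentation ρ).toSubmodule :=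
      Submodule.subset_span ⟨1, by simp⟩
    rw [h] at hyT
    exact (Submodule.mem_bot k).mp hyT
  exact congrArg Subrepresentation.toSubmodule
    ((IsSimpleOrder.eq_bot_or_eq_top _).resolve_left hTbot)

theorem sum_trace_eq_card_of_basis {U : Type*} [Group U] [Fintype U]
    (π : Representation k U W) (b : Basis U k W) (hb : ∀ u u', π u (b u') = b (u * u')) :
    ∑ u, LinearMap.trace k W (π u) = Fintype.card U := by
  simp_rw [b.trace_eq_card_fixedPoints _ _ (hb _), mul_eq_right]
  rw [Fintype.sum_eq_single 1 fun u hu ↦ by simp [hu]]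
  simp

theorem exists_basis_apply_eq_mul [FiniteDimensional k W] [IsAlgClosed k] [IsIrreducible ρ]
    {p : ℕ} (hp : p.Prime) (V : Subgroup G) [A.Normal] [IsMulCommutative A] [IsMulCommutative V]
    (hVp : ∀ v ∈ V, v ^ p = 1) (htop : A ⊔ V = ⊤) :
    ∃ (U : Subgroup G) (b : Basis U k W), ∀ u u' : U, ρ u (b u') = b (u * u') := by
  have htop_ne : (⊤ : Submodule k W) ≠ ⊥ := fun h ↦
    (bot_ne_top : (⊥ : Subrepresentation ρ) ≠ ⊤) (Subrepresentation.toSubmodule_injective h.symm)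
  obtain ⟨χ, hχ⟩ := End.exists_inf_iInf_eigenspace_ne_bot (fun a : A ↦ ρ a)
    (fun a b ↦ by rw [Commute, SemiconjBy, ← map_mul, ← map_mul, setLike_mul_comm a.2 b.2])
    htop_ne (fun _ _ _ ↦ Submodule.mem_top)
  rw [top_inf_eq] at hχ
  set V₀ := V ⊓ weightStabilizer A χ
  obtain ⟨ψ, hψ⟩ := End.exists_inf_iInf_eigenspace_ne_bot (fun v : V₀ ↦ ρ v)
    (fun v w ↦ by rw [Commute, SemiconjBy, ← map_mul, ← map_mul, setLike_mul_comm v.2.1 w.2.1])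
    hχ (fun v _ ↦ apply_mem_weightSpace ρ A v v.2.2)
  obtain ⟨y, ⟨hyA, hyV₀⟩, hy0⟩ := Submodule.exists_mem_ne_zero_of_ne_bot hψ
  obtain ⟨U, hUV, hUV₀, hVU⟩ := Subgroup.exists_complement_of_pow_prime_eq_one hp hVp V₀
  have hG (g : G) : ∃ a ∈ A, ∃ u ∈ U, ∃ w ∈ V₀, a * u * w = g := by
    obtain ⟨a, ha, v, hv, rfl⟩ := Subgroup.mem_sup_of_normal_left.mp (htop ▸ Subgroup.mem_top g)
    obtain ⟨u, hu, w, hw, rfl⟩ := hVU v hv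
    exact ⟨a, ha, u, hu, w, hw, mul_assoc _ _ _⟩
  have hU : Disjoint U (weightStabilizer A χ) := by
    rw [disjoint_iff, ← inf_eq_left.mpr hUV, inf_assoc]
    exact hUV₀.eq_bot
  refine ⟨U, Basis.mk (linearIndependent_apply_of_disjoint_weightStabilizer ρ A hyA hy0 hU)
    (span_range_apply_eq_top ρ A hyA hyV₀ hy0 hG).ge, fun u u' ↦ ?_⟩
  simp [← Module.End.mul_apply, ← map_mul]

end Representation

open CategoryTheory in
theorem FDRep.isIrreducible_of_simple {k G : Type*} [Field k] [Monoid G] (M : FDRep k G)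
    [Simple M] : Representation.IsIrreducible M.ρ := by
  refine { exists_pair_ne := ⟨⊥, ⊤, fun h ↦ id_nonzero M ?_⟩, eq_bot_or_eq_top := fun W ↦ ?_ }
  · ext x
    exact (Submodule.eq_bot_iff _).mp (congrArg Subrepresentation.toSubmodule h).symm x trivial
  · let ι : FDRep.of W.toRepresentation ⟶ M :=
      ⟨ObjectProperty.homMk (ModuleCat.ofHom W.toSubmodule.subtype), fun g ↦ by ext; rfl⟩
    have : Mono ι := ConcreteCategory.mono_of_injective ι Subtype.val_injective
    by_cases hι : ι = 0
    · refine Or.inl (Subrepresentation.toSubmodule_injective ((Submodule.eq_bot_iff _).mpr ?_))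
      intro x hx
      exact congrArg (fun f : FDRep.of W.toRepresentation ⟶ M ↦ f.hom.hom ⟨x, hx⟩) hι
    · have : IsIso ι := isIso_of_mono_of_nonzero hι
      refine Or.inr (Subrepresentation.toSubmodule_injective (Submodule.eq_top_iff'.mpr fun x ↦ ?_))
      obtain ⟨y, rfl⟩ := (ConcreteCategory.bijective_of_isIso ι).2 x
      exact y.2

theorem permChar_apply (H : Subgroup G) (g : G) :
    permChar H g = ∑ x : G ⧸ H, if g • x = x then 1 else 0 := by
  simp [permChar, Fintype.card_subtype, Finset.sum_boole]

theorem sum_ite_smul_eq_self (H : Subgroup G) {τ : G → ℂ}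
    (hτ : ∀ x g, τ (x * g * x⁻¹) = τ g) (x : G ⧸ H) :
    ∑ g : G, (if g • x = x then τ g else 0) = ∑ h : H, τ h := by
  induction x using QuotientGroup.induction_on with | H z => ?_
  have hmem (g : G) : g • (z : G ⧸ H) = z ↔ z⁻¹ * g * z ∈ H := by
    rw [MulAction.Quotient.smul_mk, QuotientGroup.eq, ← inv_mem_iff (x := z⁻¹ * g * z)]
    simp [mul_assoc]
  calc ∑ g : G, (if g • (z : G ⧸ H) = z then τ g else 0)
      = ∑ g : G, if g ∈ H then τ g else 0 :=
        Fintype.sum_equiv (MulAut.conj z⁻¹).toEquiv _ _ fun g ↦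
          if_congr ((hmem g).trans (by simp [mul_assoc])) (hτ z⁻¹ g).symm rfl
    _ = ∑ h : H, τ h := by
      rw [← Finset.sum_filter]
      exact Finset.sum_subtype _ (by simp) _

theorem innerChar_permChar (H : Subgroup G) {τ : G → ℂ} (hτ : ∀ x g, τ (x * g * x⁻¹) = τ g) :
    innerChar τ (permChar H) = (Fintype.card H : ℂ)⁻¹ * ∑ h : H, τ h := by
  have hcard : (Fintype.card G : ℂ) = Fintype.card (G ⧸ H) * Fintype.card H := by
    rw [← Nat.cast_mul, ← Nat.card_eq_fintype_card, H.card_eq_card_quotient_mul_card_subgroup]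
    simp
  have hsum : ∑ g : G, τ g * (starRingEnd ℂ) (permChar H g)
      = Fintype.card (G ⧸ H) * ∑ h : H, τ h := by
    simp only [permChar_apply, map_sum, apply_ite, map_one, map_zero, Finset.mul_sum, mul_one,
      mul_zero]
    rw [Finset.sum_comm, Finset.sum_congr rfl fun x _ ↦ sum_ite_smul_eq_self H hτ x,
      Finset.sum_const, Finset.card_univ, nsmul_eq_mul, Finset.mul_sum]
  rw [innerChar, hsum, hcard]
  field_simp [Fintype.card_ne_zero]

theorem irred_char_multiplicity_one_of_abelian_by_elementary_general
    (p : ℕ) (hp : p.Prime) (A V : Subgroup G) [A.Normal]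
    (hAab : ∀ a ∈ A, ∀ b ∈ A, a * b = b * a)
    (hVp : ∀ v ∈ V, v ^ p = 1)
    (hVab : ∀ v ∈ V, ∀ w ∈ V, v * w = w * v)
    (htop : A ⊔ V = ⊤)
    (τ : G → ℂ) (hτ : IsIrredChar τ) :
    ∃ H : Subgroup G, innerChar τ (permChar H) = 1 := by
  obtain ⟨M, _, rfl⟩ := hτ
  have : IsMulCommutative A := ⟨⟨fun a b ↦ Subtype.ext (hAab a a.2 b b.2)⟩⟩
  have : IsMulCommutative V := ⟨⟨fun v w ↦ Subtype.ext (hVab v v.2 w w.2)⟩⟩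
  have := M.isIrreducible_of_simple
  obtain ⟨U, b, hb⟩ := Representation.exists_basis_apply_eq_mul M.ρ A hp V hVp htop
  refine ⟨U, ?_⟩
  have hsum : ∑ u : U, M.character u = Fintype.card U :=
    Representation.sum_trace_eq_card_of_basis (M.ρ.comp U.subtype) b hb
  rw [innerChar_permChar U fun x g ↦ M.char_conj g x, hsum]
  exact inv_mul_cancel₀ (Nat.cast_ne_zero.mpr Fintype.card_ne_zero)

/-- Let `G = A ⋊ V` with `A` abelian and `V` an elementary abelian `p`-group.  Then every
irreducible complex character of `G` occurs with multiplicity exactly `1` in the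
permutation character `ℂ[G/H]` for a suitable subgroup `H ≤ G`. -/
theorem irred_char_multiplicity_one_of_abelian_by_elementary
    (p : ℕ) (hp : p.Prime) (A V : Subgroup G) [A.Normal]
    (hAab : ∀ a ∈ A, ∀ b ∈ A, a * b = b * a)
    (hVp : ∀ v ∈ V, v ^ p = 1)
    (hVab : ∀ v ∈ V, ∀ w ∈ V, v * w = w * v)
    (hbot : A ⊓ V = ⊥) (htop : A ⊔ V = ⊤)
    (τ : G → ℂ) (hτ : IsIrredChar τ) :
    ∃ H : Subgroup G, innerChar τ (permChar H) = 1 :=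
  irred_char_multiplicity_one_of_abelian_by_elementary_general p hp A V hAab hVp hVab htop τ hτ
end

section
/- Let G = A ⋊ V with A abelian and V an elementary abelian p-group, and let τ be a complex irreducible character of G of dimension greater than 1, written as τ = Ind_{AU}^G χ for a subgroup U ≤ V and a 1-dimensional character χ of AU. If H ≤ V satisfies HU = V and H ∩ U = {1}, then ⟨τ, C[G/H]⟩ = 1. -/
/-!
Put `K = A ⊔ U`. Because `A` is a normal complement of `V` and `H`, `U` are complements inside
the abelian group `V`, the subgroup `H` is a complement of `K` in `G`; in particular no
nontrivial element of `H` is conjugate into `K`, so `Ind_K χ` vanishes on every nontrivial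
conjugate of an element of `H`. Counting fixed points of `G` on `G ⧸ H` then gives
`⟨Ind_K χ, ℂ[G/H]⟩ = (Ind_K χ)(1) / |H| = [G : K] / |H| = 1` (Mackey's formula with the single
double coset `K H = G`).
-/

open scoped BigOperators
open Classical

variable {G : Type} [Group G] [Fintype G]

/-- The character of `G` induced from a character of a subgroup `K`. -/
noncomputable def indChar (K : Subgroup G) (χ : ↥K → ℂ) : G → ℂ :=
  fun g => (Fintype.card K : ℂ)⁻¹ *
    ∑ x : G, if h : x⁻¹ * g * x ∈ K then χ ⟨x⁻¹ * g * x, h⟩ else 0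

namespace Subgroup

theorem isComplement'_sup_of_le_normalizer {G : Type*} [Group G] {A V U H : Subgroup G}
    [A.Normal] (hAV : A ⊓ V = ⊥) (hAV' : A ⊔ V = ⊤) (hU : U ≤ V) (hH : H ≤ V)
    (hHU : H ⊔ U = V) (hHU' : H ⊓ U = ⊥) (hHN : H ≤ normalizer (U : Set G)) :
    IsComplement' (A ⊔ U) H := by
  refine isComplement'_of_disjoint_and_mul_eq_univ ?_ ?_
  · rw [disjoint_def]
    intro t ht htH
    obtain ⟨a, ha, u, hu, rfl⟩ := (Set.ext_iff.mp (normal_mul A U) t).mp ht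
    have haV : a ∈ V := by simpa using mul_mem (hH htH) (inv_mem (hU hu))
    obtain rfl : a = 1 := mem_bot.mp (hAV ▸ mem_inf.mpr ⟨ha, haV⟩)
    simp only [one_mul] at htH ⊢
    exact mem_bot.mp (hHU' ▸ mem_inf.mpr ⟨htH, hu⟩)
  · refine Set.eq_univ_of_forall fun z => ?_
    obtain ⟨a, ha, v, hv, rfl⟩ := (Set.ext_iff.mp (normal_mul A V) z).mp (hAV' ▸ mem_top z)
    obtain ⟨h, hh, u, hu, rfl⟩ :=
      (Set.ext_iff.mp (coe_mul_of_left_le_normalizer_right H U hHN) v).mp (hHU ▸ hv)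
    have hu' : h * u * h⁻¹ ∈ U := (mem_normalizer_iff.mp (hHN hh) u).mp hu
    exact ⟨a * (h * u * h⁻¹), mul_mem (mem_sup_left ha) (mem_sup_right hu'), h, hh, by group⟩

theorem IsComplement'.eq_one_of_conj_mem {G : Type*} [Group G] {K H : Subgroup G}
    (hKH : IsComplement' K H) {h z : G} (hh : h ∈ H) (hz : z * h * z⁻¹ ∈ K) : h = 1 := by
  obtain ⟨⟨k, h'⟩, rfl⟩ := hKH.2 z
  have hK : (h' : G) * h * (h' : G)⁻¹ ∈ K := by
    simpa [mul_assoc] using mul_mem (mul_mem (inv_mem k.2) hz) k.2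
  have hH : (h' : G) * h * (h' : G)⁻¹ ∈ H := mul_mem (mul_mem h'.2 hh) (inv_mem h'.2)
  simpa using (disjoint_def.mp hKH.disjoint) hK hH

end Subgroup

theorem indChar_eq_zero_of_forall_conj_notMem (K : Subgroup G) (χ : K → ℂ) {g : G}
    (hg : ∀ x : G, x⁻¹ * g * x ∉ K) : indChar K χ g = 0 := by
  simp [indChar, hg]

theorem indChar_one (K : Subgroup G) (χ : K → ℂ) (hχ : χ 1 = 1) :
    indChar K χ 1 = Fintype.card G / Fintype.card K := by
  have hχ' : ∀ h : (1 : G) ∈ K, χ ⟨1, h⟩ = 1 := fun _ => hχ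
  simp [indChar, hχ', div_eq_inv_mul]

theorem Subgroup.IsComplement'.indChar_conj_eq_zero {K H : Subgroup G}
    (hKH : K.IsComplement' H) (χ : K → ℂ) {h : G} (hh : h ∈ H) (hne : h ≠ 1) (y : G) :
    indChar K χ (y * h * y⁻¹) = 0 :=
  indChar_eq_zero_of_forall_conj_notMem K χ fun x hx =>
    hne (hKH.eq_one_of_conj_mem (z := x⁻¹ * y) hh (by simpa [mul_assoc] using hx))

theorem innerChar_permChar_of_forall_conj_eq_zero (f : G → ℂ) (H : Subgroup G)
    (hf : ∀ y, ∀ h ∈ H, h ≠ 1 → f (y * h * y⁻¹) = 0) :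
    innerChar f (permChar H) = f 1 / Fintype.card H := by
  have hfix : ∀ (x : G ⧸ H) (g : G), g • x = x → g ≠ 1 → f g = 0 := by
    intro x g hgx hg
    induction x using QuotientGroup.induction_on with | H y => ?_
    rw [MulAction.Quotient.smul_mk, QuotientGroup.eq] at hgx
    have hmem : y⁻¹ * g * y ∈ H := by simpa [mul_assoc] using inv_mem hgx
    have hne : y⁻¹ * g * y ≠ 1 := by simpa [mul_assoc, inv_mul_eq_one] using hg
    simpa [mul_assoc] using hf y _ hmem hne
  calc innerChar f (permChar H)
      = (Fintype.card G : ℂ)⁻¹ * ∑ x : G ⧸ H, ∑ g : G, if g • x = x then f g else 0 := by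
        rw [innerChar, Finset.sum_comm]
        congr 1
        refine Finset.sum_congr rfl fun g _ => ?_
        rw [permChar, map_natCast, Fintype.card_subtype, Finset.natCast_card_filter,
          Finset.mul_sum]
        simp only [mul_ite, mul_one, mul_zero]
    _ = (Fintype.card G : ℂ)⁻¹ * (Fintype.card (G ⧸ H) * f 1) := by
        have hx : ∀ x : G ⧸ H, ∑ g : G, (if g • x = x then f g else 0) = f 1 := fun x =>
          (Fintype.sum_eq_single 1 fun g hg =>
            ite_eq_right_iff.mpr fun hgx => hfix x g hgx hg).trans (if_pos (one_smul G x))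
        simp [hx]
    _ = f 1 / Fintype.card H := by
        have hcard : Fintype.card G = Fintype.card (G ⧸ H) * Fintype.card H := by
          simpa only [Nat.card_eq_fintype_card] using H.card_eq_card_quotient_mul_card_subgroup
        rw [hcard, Nat.cast_mul]
        field_simp

theorem Subgroup.IsComplement'.innerChar_indChar_permChar {K H : Subgroup G}
    (hKH : K.IsComplement' H) (χ : K → ℂ) (hχ : χ 1 = 1) :
    innerChar (indChar K χ) (permChar H) = 1 := by
  rw [innerChar_permChar_of_forall_conj_eq_zero _ H fun y _ hh hne =>
      hKH.indChar_conj_eq_zero χ hh hne y, indChar_one K χ hχ]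
  have hcard : (Fintype.card G : ℂ) = Fintype.card K * Fintype.card H := by
    simpa only [Nat.card_eq_fintype_card, Nat.cast_mul] using
      congrArg (Nat.cast : ℕ → ℂ) hKH.card_mul_card.symm
  rw [hcard]
  field_simp

theorem induced_char_multiplicity_one_general
    (A V : Subgroup G) [A.Normal]
    (hVab : ∀ v ∈ V, ∀ w ∈ V, v * w = w * v)
    (hbot : A ⊓ V = ⊥) (htop : A ⊔ V = ⊤)
    (U : Subgroup G) (hU : U ≤ V)
    (χ : ↥(A ⊔ U) →* ℂˣ)
    (τ : G → ℂ)
    (hτ : τ = indChar (A ⊔ U) (fun x => (χ x : ℂ)))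
    (H : Subgroup G) (hH : H ≤ V) (hHU : H ⊔ U = V) (hHUbot : H ⊓ U = ⊥) :
    innerChar τ (permChar H) = 1 := by
  have hHN : H ≤ Subgroup.normalizer (U : Set G) := fun h hh =>
    Subgroup.centralizer_le_normalizer _ <|
      Subgroup.mem_centralizer_iff.mpr fun u hu => hVab u (hU hu) h (hH hh)
  have hcompl := Subgroup.isComplement'_sup_of_le_normalizer hbot htop hU hH hHU hHUbot hHN
  rw [hτ]
  exact hcompl.innerChar_indChar_permChar _ (by simp)

/-- Let `G = A ⋊ V` with `A` abelian and `V` an elementary abelian `p`-group, and let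
`τ = Ind_{AU}^G χ` be an irreducible character of `G` of dimension `> 1`, with `U ≤ V` and
`χ` a 1-dimensional character of `AU`.  If `H ≤ V` satisfies `HU = V` and `H ∩ U = 1`,
then `⟨τ, ℂ[G/H]⟩ = 1`. -/
theorem induced_char_multiplicity_one
    (p : ℕ) (hp : p.Prime) (A V : Subgroup G) [A.Normal]
    (hAab : ∀ a ∈ A, ∀ b ∈ A, a * b = b * a)
    (hVp : ∀ v ∈ V, v ^ p = 1)
    (hVab : ∀ v ∈ V, ∀ w ∈ V, v * w = w * v)
    (hbot : A ⊓ V = ⊥) (htop : A ⊔ V = ⊤)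
    (U : Subgroup G) (hU : U ≤ V)
    (χ : ↥(A ⊔ U) →* ℂˣ)
    (τ : G → ℂ) (hτirr : IsIrredChar τ) (hdim : 1 < (τ 1).re)
    (hτ : τ = indChar (A ⊔ U) (fun x => (χ x : ℂ)))
    (H : Subgroup G) (hH : H ≤ V) (hHU : H ⊔ U = V) (hHUbot : H ⊓ U = ⊥) :
    innerChar τ (permChar H) = 1 :=
  induced_char_multiplicity_one_general A V hVab hbot htop U hU χ τ hτ H hH hHU hHUbot
end
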